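/- For every integer b ≥ 2, the generalized Somos constant satisfies σ_b = (b/(b-1)) · exp(-γ(1/b)/b), where γ(z) = Σ_{i=1}^∞ z^{i-1} (1/i - log((i+1)/i)) is the generalized Euler-constant function. -/

import Mathlib

open Real

/-- The generalized Somos constant `σ_b = ∏_{i=1}^∞ i^{(b-1)/b^i}`. -/
noncomputable def somosB (b : ℕ) : ℝ :=
  ∏' i : ℕ, ((i : ℝ) + 1) ^ (((b : ℝ) - 1) / (b : ℝ) ^ (i + 1))

/-- The generalized Euler-constant function
`γ(z) = ∑_{i=1}^∞ z^{i-1} (1/i - log((i+1)/i))`. -/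
noncomputable def eulerGamma (z : ℝ) : ℝ :=
  ∑' i : ℕ, z ^ i * (((i : ℝ) + 1)⁻¹ - Real.log (((i : ℝ) + 2) / ((i : ℝ) + 1)))

/-!
With `x = 1/b` and `L(x) = ∑_{i ≥ 0} xⁱ log (i + 1)`, one has `log σ_b = (1 - x) L(x)`. Splitting
`log ((i + 2) / (i + 1))` and shifting the index telescopes `∑ xⁱ⁺¹ log ((i + 2) / (i + 1))` into
`(1 - x) L(x)`, while `∑ xⁱ⁺¹ / (i + 1) = -log (1 - x)`. Hence `x γ(x) = -log (1 - x) - log σ_b`.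
-/

noncomputable def logSeries (x : ℝ) : ℝ :=
  ∑' i : ℕ, x ^ i * log (i + 1)

lemma summable_pow_mul_log_succ {x : ℝ} (hx : |x| < 1) :
    Summable fun i : ℕ => x ^ i * log (i + 1) := by
  refine .of_norm_bounded
    (summable_pow_mul_geometric_of_norm_lt_one 1 (by rwa [norm_eq_abs, abs_abs])) fun i => ?_
  have hlog : log ((i : ℝ) + 1) ≤ i := by
    linarith [log_le_sub_one_of_pos (x := (i : ℝ) + 1) (by positivity)]
  rw [norm_mul, norm_pow, norm_eq_abs, norm_eq_abs, abs_of_nonneg (log_nonneg (by simp)), pow_one,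
    mul_comm]
  gcongr

lemma hasSum_pow_succ_mul_log_div {x : ℝ} (hx : |x| < 1) :
    HasSum (fun i : ℕ => x ^ (i + 1) * log ((i + 2) / (i + 1))) ((1 - x) * logSeries x) := by
  have hL : HasSum (fun i : ℕ => x ^ i * log (i + 1)) (logSeries x) :=
    (summable_pow_mul_log_succ hx).hasSum
  have hshift : HasSum (fun i : ℕ => x ^ (i + 1) * log ((i + 1 : ℕ) + 1)) (logSeries x) := by
    simpa using (hasSum_nat_add_iff' 1).mpr hL
  rw [sub_mul, one_mul]
  refine (hshift.sub (hL.mul_left x)).congr_fun fun i => ?_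
  push_cast
  rw [log_div (by positivity) (by positivity), pow_succ]
  ring_nf

lemma mul_eulerGamma {x : ℝ} (hx : |x| < 1) :
    x * eulerGamma x = -log (1 - x) - (1 - x) * logSeries x := by
  rw [eulerGamma, ← tsum_mul_left]
  refine ((hasSum_pow_div_log_of_abs_lt_one hx).sub (hasSum_pow_succ_mul_log_div hx)).tsum_eq ▸ ?_
  congr 1
  ext i
  rw [pow_succ]
  ring_nf

lemma abs_inv_natCast_lt_one {b : ℕ} (hb : 1 < b) : |(b : ℝ)⁻¹| < 1 := by
  rw [abs_inv, Nat.abs_cast]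
  exact inv_lt_one_of_one_lt₀ (by exact_mod_cast hb)

lemma somosB_eq_exp_logSeries {b : ℕ} (hb : 1 < b) :
    somosB b = exp ((1 - (b : ℝ)⁻¹) * logSeries (b : ℝ)⁻¹) := by
  have hS := ((summable_pow_mul_log_succ (abs_inv_natCast_lt_one hb)).hasSum.mul_left
    (1 - (b : ℝ)⁻¹)).rexp
  rw [← tsum_mul_left] at hS
  rw [logSeries, ← tsum_mul_left, somosB, ← hS.tprod_eq]
  congr 1
  ext i
  rw [Function.comp_apply, rpow_def_of_pos (by positivity), inv_pow]
  congr 1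
  field_simp
  ring

/-- For every integer `b ≥ 2`, `σ_b = (b/(b-1)) exp(-γ(1/b)/b)`. -/
theorem somosB_eq_exp_eulerGamma (b : ℕ) (hb : 2 ≤ b) :
    somosB b = ((b : ℝ) / ((b : ℝ) - 1)) * Real.exp (-(eulerGamma ((b : ℝ))⁻¹) / (b : ℝ)) := by
  have hb1 : (1 : ℝ) < b := by exact_mod_cast hb
  have h1x : 1 - (b : ℝ)⁻¹ = ((b : ℝ) - 1) / b := by field_simp
  have hexponent : (1 - (b : ℝ)⁻¹) * logSeries (b : ℝ)⁻¹ =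
      -log (1 - (b : ℝ)⁻¹) + -eulerGamma (b : ℝ)⁻¹ / b := by
    rw [div_eq_inv_mul]
    linarith [mul_eulerGamma (abs_inv_natCast_lt_one hb)]
  rw [somosB_eq_exp_logSeries hb, hexponent, exp_add, exp_neg,
    exp_log (by rw [h1x]; exact div_pos (by linarith) (by linarith)), h1x, inv_div]
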